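/- arXiv:2203.16713 — 2 statements merged into one kernel-verified Lean document; each statement's English description precedes it below -/
import Mathlib

section
/- In the set-cover Wordle reduction, if every subfamily of F of size at most c leaves at least two elements of U uncovered, then after any sequence of c guesses from the dictionary D_F, there remain at least two feasible element-words; specifically, if F_sets is the collection of sets whose set-words were guessed and F_elem the singletons of guessed element-words, then any element-word w_u with u ∉ ⋃(F_sets ∪ F_elem) is feasible, and at least two such u exist. -/
/-! A guess from `D_F` shows the symbol `1` on a set of positions contained in a member of `F`:
the set itself for a set-word, and any member of `F` covering `v` for `w_v`. So `c` guesses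
show `1` only inside the union of at most `c` members of `F`, which misses two elements.
For an element `u` outside it, a guess in `D_F` has no green against `w_u`, and it uses
neither `1` at position `u` nor the letter `s_u`; its feedback against `w_u` is then the same
for all such `u`. -/

/-- The element-word `w_{u_i}`: symbol `1` at position `i`, symbol `s_i = i + 2` elsewhere
(alphabet `Fin (n+2)` with `⊥ = 0`, `1 = 1`, `s_i = i + 2`). -/
def elemWord (n : ℕ) (i : Fin n) : Fin n → Fin (n + 2) :=
  fun j => if j = i then 1 else ⟨i.val + 2, by omega⟩

/-- The set-word `w_S`: symbol `1` at positions in `S`, symbol `⊥ = 0` elsewhere. -/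
def setWord (n : ℕ) (S : Finset (Fin n)) : Fin n → Fin (n + 2) :=
  fun j => if j ∈ S then 1 else 0

/-- The dictionary `D_F`: all element-words and all set-words. -/
def DF (n : ℕ) (F : Finset (Finset (Fin n))) : Finset (Fin n → Fin (n + 2)) :=
  Finset.univ.image (elemWord n) ∪ F.image (setWord n)

/-- Wordle feedback: green positions, and per letter the number of yellow marks
(the standard marking rule yields, per letter, the `min` of its non-green multiplicities
in the guess and in the secret). -/
def feedback {k : ℕ} {V : Type*} [DecidableEq V] (p w : Fin k → V) :
    (Fin k → Bool) × (V → ℕ) :=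
  ⟨fun i => decide (p i = w i),
   fun a => min ((Finset.univ.filter (fun i => p i = a ∧ p i ≠ w i)).card)
                ((Finset.univ.filter (fun i => w i = a ∧ p i ≠ w i)).card)⟩

theorem Finset.exists_two_notMem_of_forall_exists_subset {α β : Type*} [Fintype α]
    [DecidableEq α] {F : Finset (Finset α)} {c : ℕ}
    (hhard : ∀ K ⊆ F, K.card ≤ c → 2 ≤ ((Finset.univ : Finset α) \ K.sup id).card)
    (G : Finset β) (hG : G.card ≤ c) (cov : β → Finset α)
    (hcov : ∀ b ∈ G, ∃ S ∈ F, cov b ⊆ S) :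
    ∃ u₁ u₂ : α, u₁ ≠ u₂ ∧ ∀ b ∈ G, u₁ ∉ cov b ∧ u₂ ∉ cov b := by
  choose! S hSF hcovS using hcov
  have hK : G.image S ⊆ F := by
    simpa only [Finset.image_subset_iff] using hSF
  obtain ⟨u₁, hu₁, u₂, hu₂, hne⟩ := Finset.one_lt_card.mp
    (hhard _ hK (Finset.card_image_le.trans hG))
  have hout : ∀ u ∈ (Finset.univ : Finset α) \ (G.image S).sup id, ∀ b ∈ G, u ∉ cov b :=
    fun u hu b hb hub => (Finset.mem_sdiff.mp hu).2 <|
      Finset.mem_sup.mpr ⟨S b, Finset.mem_image_of_mem S hb, hcovS b hb hub⟩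
  exact ⟨u₁, u₂, hne, fun b hb => ⟨hout u₁ hu₁ b hb, hout u₂ hu₂ b hb⟩⟩

lemma val_elemWord (n : ℕ) (i j : Fin n) :
    (elemWord n i j : ℕ) = if j = i then 1 else (i : ℕ) + 2 := by
  unfold elemWord
  split_ifs <;> rfl

lemma val_setWord (n : ℕ) (S : Finset (Fin n)) (j : Fin n) :
    (setWord n S j : ℕ) = if j ∈ S then 1 else 0 := by
  unfold setWord
  split_ifs <;> rfl

def onePositions {n : ℕ} (p : Fin n → Fin (n + 2)) : Finset (Fin n) :=
  Finset.univ.filter (fun j => p j = 1)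

lemma mem_onePositions {n : ℕ} {p : Fin n → Fin (n + 2)} {j : Fin n} :
    j ∈ onePositions p ↔ (p j : ℕ) = 1 := by
  simp [onePositions, Fin.ext_iff]

lemma onePositions_elemWord (n : ℕ) (i : Fin n) : onePositions (elemWord n i) = {i} := by
  ext j
  simp only [mem_onePositions, val_elemWord, Finset.mem_singleton]
  split_ifs <;> omega

lemma onePositions_setWord (n : ℕ) (S : Finset (Fin n)) : onePositions (setWord n S) = S := by
  ext j
  simp only [mem_onePositions, val_setWord]
  split_ifs <;> simp_all

lemma exists_onePositions_subset_of_mem_DF {n : ℕ} {F : Finset (Finset (Fin n))}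
    (hcover : ∀ u : Fin n, ∃ S ∈ F, u ∈ S) {p : Fin n → Fin (n + 2)} (hp : p ∈ DF n F) :
    ∃ S ∈ F, onePositions p ⊆ S := by
  rcases Finset.mem_union.mp hp with hp | hp
  · obtain ⟨i, -, rfl⟩ := Finset.mem_image.mp hp
    obtain ⟨S, hSF, hiS⟩ := hcover i
    exact ⟨S, hSF, by simpa [onePositions_elemWord] using hiS⟩
  · obtain ⟨S, hSF, rfl⟩ := Finset.mem_image.mp hp
    exact ⟨S, hSF, (onePositions_setWord n S).subset⟩

lemma val_ne_add_two_of_mem_DF {n : ℕ} {F : Finset (Finset (Fin n))}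
    {p : Fin n → Fin (n + 2)} (hp : p ∈ DF n F) {u : Fin n} (hu : u ∉ onePositions p)
    (j : Fin n) : (p j : ℕ) ≠ u + 2 := by
  rcases Finset.mem_union.mp hp with hp | hp
  · obtain ⟨i, -, rfl⟩ := Finset.mem_image.mp hp
    rw [onePositions_elemWord, Finset.mem_singleton] at hu
    have : (u : ℕ) ≠ i := Fin.val_ne_of_ne hu
    rw [val_elemWord]
    split_ifs <;> omega
  · obtain ⟨S, -, rfl⟩ := Finset.mem_image.mp hp
    rw [val_setWord]
    split_ifs <;> omega

lemma feedback_elemWord_of_notMem {n : ℕ} {p : Fin n → Fin (n + 2)} {u : Fin n}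
    (hu : u ∉ onePositions p) (hs : ∀ j, (p j : ℕ) ≠ u + 2) :
    feedback p (elemWord n u) =
      ⟨fun _ => false, fun a => if a = 1 then min (onePositions p).card 1 else 0⟩ := by
  rw [mem_onePositions] at hu
  have hgreen : ∀ j, p j ≠ elemWord n u j := fun j h => by
    have hval := congrArg Fin.val h
    rw [val_elemWord] at hval
    split_ifs at hval with hj
    · exact hu (hj ▸ hval)
    · exact hs j hval
  unfold feedback
  refine Prod.ext (funext fun j => by simpa using hgreen j) (funext fun a => ?_)
  simp only [ne_eq, hgreen, not_false_eq_true, and_true]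
  split_ifs with ha
  · subst ha
    have hw1 : Finset.univ.filter (fun j => elemWord n u j = 1) = {u} :=
      onePositions_elemWord n u
    rw [hw1, Finset.card_singleton]
    rfl
  · by_cases has : (a : ℕ) = u + 2
    · have hpa : Finset.univ.filter (fun j => p j = a) = ∅ :=
        Finset.filter_false_of_mem fun j _ hj => hs j (hj ▸ has)
      simp [hpa]
    · have hwa : Finset.univ.filter (fun j => elemWord n u j = a) = ∅ := by
        refine Finset.filter_false_of_mem fun j _ hj => ?_
        have hval := congrArg Fin.val hj
        rw [val_elemWord] at hval
        split_ifs at hval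
        · exact ha (Fin.ext (by simpa using hval.symm))
        · exact has hval.symm
      simp [hwa]

/-- if every subfamily of `F` of size at most `c` leaves at least two
elements uncovered, then after any sequence of at most `c` guesses from `D_F` there
remain two distinct uncovered, unguessed elements `u₁, u₂` whose element-words are
feasible and receive identical feedback on every guess, so the guesser cannot
distinguish them. -/
theorem two_feasible_element_words (n c : ℕ) (F : Finset (Finset (Fin n)))
    (hcover : ∀ u : Fin n, ∃ S ∈ F, u ∈ S)
    (hhard : ∀ K ⊆ F, K.card ≤ c → 2 ≤ ((Finset.univ : Finset (Fin n)) \ K.sup id).card)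
    (L : List (Fin n → Fin (n + 2))) (hL : ∀ p ∈ L, p ∈ DF n F) (hlen : L.length ≤ c) :
    ∃ u₁ u₂ : Fin n, u₁ ≠ u₂ ∧
      (∀ S ∈ F, setWord n S ∈ L → u₁ ∉ S ∧ u₂ ∉ S) ∧
      elemWord n u₁ ∉ L ∧ elemWord n u₂ ∉ L ∧
      ∀ p ∈ L, feedback p (elemWord n u₁) = feedback p (elemWord n u₂) := by
  obtain ⟨u₁, u₂, hne, hout⟩ := Finset.exists_two_notMem_of_forall_exists_subset hhard
    L.toFinset (L.toFinset_card_le.trans hlen) onePositions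
    fun p hp => exists_onePositions_subset_of_mem_DF hcover (hL p (List.mem_toFinset.mp hp))
  have hfree : ∀ p ∈ L, u₁ ∉ onePositions p ∧ u₂ ∉ onePositions p :=
    fun p hp => hout p (List.mem_toFinset.mpr hp)
  have hguessed : ∀ u, u ∈ onePositions (elemWord n u) := by
    simp [onePositions_elemWord]
  refine ⟨u₁, u₂, hne, fun S _ hS => by simpa [onePositions_setWord] using hfree _ hS,
    fun h => (hfree _ h).1 (hguessed u₁), fun h => (hfree _ h).2 (hguessed u₂), fun p hp => ?_⟩
  obtain ⟨hu₁, hu₂⟩ := hfree p hp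
  rw [feedback_elemWord_of_notMem hu₁ (val_ne_add_two_of_mem_DF (hL p hp) hu₁),
    feedback_elemWord_of_notMem hu₂ (val_ne_add_two_of_mem_DF (hL p hp) hu₂)]
end

section
/- In the dominating-set Wordle reduction with dictionary D_G, for any two distinct vertices u and v of a graph G with no self-loops, the constant word w'_u = (u,u,u,u,u) shares a symbol with the guess w_v = (v, n₁, n₂, n₃, n₄) if and only if v dominates u (i.e., u = v or u is a neighbor of v). -/
/-- The word `w_v = (v, n₁, n₂, n₃, n₄)` listing `v` and its neighbors. -/
def wv {V : Type*} (nbr : V → Fin 4 → V) (v : V) : Fin 5 → V :=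
  fun i => Fin.cases v (fun j => nbr v j) i

/-- The constant word `w'_u = (u,u,u,u,u)`. -/
def wv' {V : Type*} (u : V) : Fin 5 → V := fun _ => u

theorem SimpleGraph.exists_eq_iff_adj_of_image_eq {V ι : Type*} [Fintype ι] [DecidableEq V]
    {G : SimpleGraph V} {v : V} [Fintype (G.neighborSet v)] {f : ι → V}
    (hf : Finset.univ.image f = G.neighborFinset v) (u : V) :
    (∃ j, f j = u) ↔ G.Adj v u := by
  rw [← G.mem_neighborFinset, ← hf, Finset.mem_image]
  simp only [Finset.mem_univ, true_and]

theorem exists_wv_eq_iff {V : Type*} (nbr : V → Fin 4 → V) (u v : V) :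
    (∃ i, wv nbr v i = u) ↔ v = u ∨ ∃ j, nbr v j = u := by
  simp only [Fin.exists_fin_succ, wv, Fin.cases_zero, Fin.cases_succ]

/-- for distinct vertices `u ≠ v` of a simple graph, the constant word
`w'_u` shares a symbol with the guess `w_v = (v, n₁, n₂, n₃, n₄)` iff `v` dominates `u`
(i.e. `u = v` or `u` is a neighbor of `v`). -/
theorem shares_symbol_iff_dominates {V : Type*} [Fintype V] [DecidableEq V]
    (G : SimpleGraph V) [DecidableRel G.Adj] (nbr : V → Fin 4 → V)
    (hnbr : ∀ v, Finset.univ.image (nbr v) = G.neighborFinset v)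
    (u v : V) (huv : u ≠ v) :
    (∃ i : Fin 5, wv nbr v i = u) ↔ (u = v ∨ G.Adj v u) := by
  rw [exists_wv_eq_iff, G.exists_eq_iff_adj_of_image_eq (hnbr v)]
  simp only [huv, huv.symm, false_or]
end
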